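/- arXiv:math/0303181 — 4 statements merged into one kernel-verified Lean document; each statement's English description precedes it below -/
import Mathlib

section
/- Let N : ℂ → Matrix (Fin n) (Fin n) ℂ and g : ℂ → ℂ be differentiable with g ≠ 0, satisfying g·Ṅ = η and ġ = (1/2)·trace(η·M) where M = -N⁻¹ and η is the identity matrix. Then g² · det(N) is constant (its derivative vanishes). -/
/-!
By Jacobi's formula, `(det N)' = trace (adj N * Ṅ)`, so `g² (det N)' = g · trace (adj N * (g Ṅ)) =
g · trace (adj N)`. On the other hand `adj N = det N • N⁻¹` because `det N` is a unit, so the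
second equation gives `2 g ġ det N = -g · trace (adj N)`, and the two terms of `(g² det N)'` cancel.
-/

open Matrix

namespace Matrix

variable {n R : Type*} [Fintype n] [DecidableEq n] [CommRing R]

theorem prod_updateCol_perm (A : Matrix n n R) (b : n → R) (σ : Equiv.Perm n) (i : n) :
    ∏ j, A.updateCol i b (σ j) j = (∏ j ∈ Finset.univ.erase i, A (σ j) j) * b (σ i) := by
  rw [← Finset.prod_erase_mul _ _ (Finset.mem_univ i), updateCol_self]
  congr 1
  refine Finset.prod_congr rfl fun j hj => ?_
  rw [updateCol_ne (Finset.ne_of_mem_erase hj)]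

theorem sum_det_updateCol (A B : Matrix n n R) :
    ∑ i, (A.updateCol i fun j => B j i).det = (A.adjugate * B).trace := by
  simp only [← cramer_apply, cramer_eq_adjugate_mulVec, trace, diag, mul_apply, mulVec, dotProduct]

theorem adjugate_eq_det_smul_inv {A : Matrix n n R} (h : IsUnit A.det) :
    A.adjugate = A.det • A⁻¹ := by
  rw [inv_def, smul_smul, Ring.mul_inverse_cancel _ h, one_smul]

end Matrix

section Jacobi

variable {𝕜 𝔸 n : Type*} [NontriviallyNormedField 𝕜] [NormedCommRing 𝔸] [NormedAlgebra 𝕜 𝔸]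
  [Fintype n] [DecidableEq n]

theorem HasDerivAt.matrix_det {N : 𝕜 → Matrix n n 𝔸} {N' : Matrix n n 𝔸} {u : 𝕜}
    (hN : ∀ i j, HasDerivAt (fun v => N v i j) (N' i j) u) :
    HasDerivAt (fun v => (N v).det) ((N u).adjugate * N').trace u := by
  simp only [det_apply, ← sum_det_updateCol]
  rw [Finset.sum_comm]
  refine HasDerivAt.fun_sum fun σ _ => ?_
  simp only [prod_updateCol_perm, ← Finset.smul_sum]
  exact (HasDerivAt.fun_finsetProd fun i _ => hN (σ i) i).fun_const_smul σ.sign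

end Jacobi

theorem quadric_ansatz_first_integral_general {n : ℕ}
    (N : ℂ → Matrix (Fin n) (Fin n) ℂ) (g : ℂ → ℂ)
    (hNdiff : ∀ i j, Differentiable ℂ fun u => N u i j)
    (hNinv : ∀ u, IsUnit (N u).det)
    (hg : Differentiable ℂ g)
    (hODE1 : ∀ u, g u • (Matrix.of fun i j => deriv (fun v => N v i j) u)
      = (1 : Matrix (Fin n) (Fin n) ℂ))
    (hODE2 : ∀ u, deriv g u = (1/2) * Matrix.trace (-(N u)⁻¹)) :
    ∀ u, deriv (fun v => (g v)^2 * (N v).det) u = 0 := by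
  intro u
  set N' : Matrix (Fin n) (Fin n) ℂ := .of fun i j => deriv (fun v => N v i j) u
  have hdet : HasDerivAt (fun v => (N v).det) ((N u).adjugate * N').trace u :=
    HasDerivAt.matrix_det fun i j => (hNdiff i j u).hasDerivAt
  have hg2 : HasDerivAt (fun v => g v ^ 2) (2 * g u * deriv g u) u := by
    simpa using (hg u).hasDerivAt.fun_pow 2
  have hgN' : g u ^ 2 * ((N u).adjugate * N').trace = g u * (N u).adjugate.trace :=
    calc g u ^ 2 * ((N u).adjugate * N').trace
        = g u * ((N u).adjugate * (g u • N')).trace := by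
          rw [mul_smul_comm, trace_smul, smul_eq_mul]; ring
      _ = g u * (N u).adjugate.trace := by rw [hODE1, Matrix.mul_one]
  have hgdet : 2 * g u * deriv g u * (N u).det = -(g u * (N u).adjugate.trace) := by
    rw [hODE2, adjugate_eq_det_smul_inv (hNinv u), trace_smul, trace_neg, smul_eq_mul]
    ring
  rw [(hg2.fun_mul hdet).deriv, hgN', hgdet, neg_add_cancel]

/-- If `g·Ṅ = 1` (identity) and `ġ = ½ trace(M)` with `M = -N⁻¹`, then
`g² · det N` is constant: its derivative vanishes. -/
theorem quadric_ansatz_first_integral {n : ℕ}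
    (N : ℂ → Matrix (Fin n) (Fin n) ℂ) (g : ℂ → ℂ)
    (hNdiff : ∀ i j, Differentiable ℂ fun u => N u i j)
    (hNinv : ∀ u, IsUnit (N u).det)
    (hg : Differentiable ℂ g) (hg0 : ∀ u, g u ≠ 0)
    (hODE1 : ∀ u, g u • (Matrix.of fun i j => deriv (fun v => N v i j) u)
      = (1 : Matrix (Fin n) (Fin n) ℂ))
    (hODE2 : ∀ u, deriv g u = (1/2) * Matrix.trace (-(N u)⁻¹)) :
    ∀ u, deriv (fun v => (g v)^2 * (N v).det) u = 0 :=
  quadric_ansatz_first_integral_general N g hNdiff hNinv hg hODE1 hODE2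
end

section
/- Let H : ℂ → ℂ be differentiable and satisfy the ODE Ḣ² = ∏ᵢ₌₁ⁿ (H - βᵢ) for constants β₁,…,βₙ ∈ ℂ, with Ḣ nonvanishing on a domain. Define V implicitly near a point by the relation ∑ᵢ₌₁ⁿ xᵢ²/(H(V) - βᵢ) = C with each H(V) - βᵢ ≠ 0. Then V satisfies the Laplace equation ∑ᵢ ∂²V/∂xᵢ² = 0 on that domain. -/
/-!
Write `W = H ∘ V`, `S = ∑ xᵢ² / (W - βᵢ)²` and `T = ∑ xᵢ² / (W - βᵢ)³`. Differentiating the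
relation `∑ xᵢ² / (W - βᵢ) = C` along `eⱼ` gives `2 xⱼ / (W - βⱼ) = S ∂ⱼW`, hence `S |∇W|² = 4`.
Differentiating this once more along `eⱼ` and summing over `j`, the terms in `T` cancel and leave
`S ΔW = 2 ∑ 1 / (W - βᵢ)`. Taking the logarithmic derivative of `Ḣ² = ∏ (H - βᵢ)` gives
`2 Ḧ = Ḣ² ∑ 1 / (H - βᵢ)`, and therefore `Ḣ(V) ΔV = ΔW - Ḧ(V) |∇V|² = 0`.
-/

open Filter Topology

section LineDeriv

variable {𝕜 E F : Type*} [NontriviallyNormedField 𝕜] [NormedAddCommGroup E] [NormedSpace 𝕜 E]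
  [NormedAddCommGroup F] [NormedSpace 𝕜 F] {x v : E}

theorem HasLineDerivAt.eq_zero_of_eventuallyEq_const {f : E → F} {f' : F} {c : F}
    (hf : HasLineDerivAt 𝕜 f f' x v) (hc : f =ᶠ[𝓝 x] fun _ => c) : f' = 0 :=
  hf.unique <| by simpa using ((hasFDerivAt_const c x).hasLineDerivAt v).congr_of_eventuallyEq hc

theorem HasDerivAt.comp_hasLineDerivAt {φ : 𝕜 → 𝕜} {φ' : 𝕜} {f : E → 𝕜} {f' : 𝕜}
    (hφ : HasDerivAt φ φ' (f x)) (hf : HasLineDerivAt 𝕜 f f' x v) :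
    HasLineDerivAt 𝕜 (fun z => φ (f z)) (φ' * f') x v := by
  have := (show HasDerivAt φ φ' (f (x + (0 : 𝕜) • v)) by simpa using hφ).comp (0 : 𝕜) hf
  unfold HasLineDerivAt
  simpa [Function.comp_def, mul_comm] using this

theorem HasLineDerivAt.pow {f : E → 𝕜} {f' : 𝕜} (hf : HasLineDerivAt 𝕜 f f' x v) (n : ℕ) :
    HasLineDerivAt 𝕜 (fun z => f z ^ n) (n * f x ^ (n - 1) * f') x v := by
  simpa [mul_assoc] using (hasDerivAt_pow n (f x)).comp_hasLineDerivAt hf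

theorem HasLineDerivAt.sub_const {f : E → 𝕜} {f' : 𝕜} (hf : HasLineDerivAt 𝕜 f f' x v)
    (c : 𝕜) : HasLineDerivAt 𝕜 (fun z => f z - c) f' x v :=
  HasDerivAt.sub_const c hf

theorem HasLineDerivAt.mul {f g : E → 𝕜} {f' g' : 𝕜} (hf : HasLineDerivAt 𝕜 f f' x v)
    (hg : HasLineDerivAt 𝕜 g g' x v) :
    HasLineDerivAt 𝕜 (fun z => f z * g z) (f' * g x + f x * g') x v := by
  unfold HasLineDerivAt
  simpa using HasDerivAt.fun_mul hf hg

theorem HasLineDerivAt.div {f g : E → 𝕜} {f' g' : 𝕜} (hf : HasLineDerivAt 𝕜 f f' x v)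
    (hg : HasLineDerivAt 𝕜 g g' x v) (hx : g x ≠ 0) :
    HasLineDerivAt 𝕜 (fun z => f z / g z) ((f' * g x - f x * g') / g x ^ 2) x v := by
  unfold HasLineDerivAt
  simpa using HasDerivAt.fun_div hf hg (by simpa using hx)

theorem HasLineDerivAt.fun_sum {ι : Type*} {u : Finset ι} {f : ι → E → 𝕜} {f' : ι → 𝕜}
    (hf : ∀ i ∈ u, HasLineDerivAt 𝕜 (f i) (f' i) x v) :
    HasLineDerivAt 𝕜 (fun z => ∑ i ∈ u, f i z) (∑ i ∈ u, f' i) x v :=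
  HasDerivAt.fun_sum hf

theorem hasLineDerivAt_apply {ι : Type*} [Fintype ι] (i : ι) (x v : ι → 𝕜) :
    HasLineDerivAt 𝕜 (fun z => z i) (v i) x v :=
  (ContinuousLinearMap.proj (R := 𝕜) (φ := fun _ : ι => 𝕜) i).hasFDerivAt.hasLineDerivAt v

theorem HasLineDerivAt.sum_div_sub_pow {ι : Type*} [Fintype ι] {a : ι → E → 𝕜} {a' : ι → 𝕜}
    {g : E → 𝕜} {g' : 𝕜} {β : ι → 𝕜} (ha : ∀ i, HasLineDerivAt 𝕜 (a i) (a' i) x v)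
    (hg : HasLineDerivAt 𝕜 g g' x v) (hβ : ∀ i, g x - β i ≠ 0) (k : ℕ) :
    HasLineDerivAt 𝕜 (fun z => ∑ i, a i z / (g z - β i) ^ k)
      (∑ i, a' i / (g x - β i) ^ k - k * (∑ i, a i x / (g x - β i) ^ (k + 1)) * g') x v := by
  have hterm : ∀ i, HasLineDerivAt 𝕜 (fun z => a i z / (g z - β i) ^ k)
      (a' i / (g x - β i) ^ k - k * (a i x / (g x - β i) ^ (k + 1)) * g') x v := by
    intro i
    have hW := hβ i
    convert (ha i).div ((hg.sub_const (β i)).pow k) (pow_ne_zero k hW) using 1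
    cases k
    · simp
    · simp only [Nat.add_sub_cancel]
      field_simp
      ring
  have := HasLineDerivAt.fun_sum (u := Finset.univ) fun i _ => hterm i
  rwa [Finset.sum_sub_distrib, ← Finset.sum_mul, ← Finset.mul_sum] at this

end LineDeriv

section QuadricRelation

variable {𝕜 ι : Type*} [NontriviallyNormedField 𝕜] [Fintype ι] {β : ι → 𝕜}
  {g : (ι → 𝕜) → 𝕜} {g' : 𝕜} {x v : ι → 𝕜}

theorem HasLineDerivAt.sum_two_mul_div_eq_of_eventuallyEq_const
    (hg : HasLineDerivAt 𝕜 g g' x v) (hβ : ∀ i, g x - β i ≠ 0) {C : 𝕜}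
    (hC : (fun z => ∑ i, z i ^ 2 / (g z - β i)) =ᶠ[𝓝 x] fun _ => C) :
    ∑ i, 2 * x i * v i / (g x - β i) = (∑ i, x i ^ 2 / (g x - β i) ^ 2) * g' := by
  have hsq : ∀ i, HasLineDerivAt 𝕜 (fun z => z i ^ 2) (2 * x i * v i) x v := fun i => by
    simpa using (hasLineDerivAt_apply i x v).pow 2
  have h := (HasLineDerivAt.sum_div_sub_pow hsq hg hβ 1).eq_zero_of_eventuallyEq_const
    (by simpa only [pow_one] using hC)
  simp only [pow_one] at h
  linear_combination h

theorem HasLineDerivAt.sum_two_mul_div_sub_eq_of_eventuallyEq {D : (ι → 𝕜) → 𝕜} {D' : 𝕜}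
    (hg : HasLineDerivAt 𝕜 g g' x v) (hD : HasLineDerivAt 𝕜 D D' x v)
    (hβ : ∀ i, g x - β i ≠ 0)
    (hid : (fun z => ∑ i, 2 * z i * v i / (g z - β i)) =ᶠ[𝓝 x]
      fun z => (∑ i, z i ^ 2 / (g z - β i) ^ 2) * D z) :
    ∑ i, 2 * v i * v i / (g x - β i) - (∑ i, 2 * x i * v i / (g x - β i) ^ 2) * g' =
      (∑ i, 2 * x i * v i / (g x - β i) ^ 2 - 2 * (∑ i, x i ^ 2 / (g x - β i) ^ 3) * g') * D x
        + (∑ i, x i ^ 2 / (g x - β i) ^ 2) * D' := by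
  have hsq : ∀ i, HasLineDerivAt 𝕜 (fun z => z i ^ 2) (2 * x i * v i) x v := fun i => by
    simpa using (hasLineDerivAt_apply i x v).pow 2
  have hlin : ∀ i, HasLineDerivAt 𝕜 (fun z => 2 * z i * v i) (2 * v i * v i) x v := fun i =>
    ((hasLineDerivAt_apply i x v).const_mul 2).mul_const (v i)
  have hL := HasLineDerivAt.sum_div_sub_pow hlin hg hβ 1
  have hR := (HasLineDerivAt.sum_div_sub_pow hsq hg hβ 2).mul hD
  simp only [pow_one] at hL
  have := hL.unique (hR.congr_of_eventuallyEq (by simpa only [pow_one] using hid))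
  push_cast at this
  linear_combination this

end QuadricRelation

theorem two_mul_deriv_deriv_eq_of_sq_deriv_eq_prod {𝕜 ι : Type*} [NontriviallyNormedField 𝕜]
    [Fintype ι] {f : 𝕜 → 𝕜} {β : ι → 𝕜} {y : 𝕜} (hf : ∀ y, deriv f y ^ 2 = ∏ i, (f y - β i))
    (hd : DifferentiableAt 𝕜 f y) (hd2 : DifferentiableAt 𝕜 (deriv f) y)
    (h1 : deriv f y ≠ 0) (h2 : ∀ i, f y - β i ≠ 0) :
    2 * deriv (deriv f) y = deriv f y ^ 2 * ∑ i, (f y - β i)⁻¹ := by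
  have h := congrArg (logDeriv · y) (funext hf)
  rw [logDeriv_fun_pow hd2, logDeriv_prod (fun i _ => h2 i) (fun i _ => hd.sub_const (β i))] at h
  simp only [logDeriv_apply, deriv_sub_const, div_eq_mul_inv, ← Finset.mul_sum] at h
  field_simp at h ⊢
  linear_combination h

section Summation

variable {K ι : Type*} [Field K] [Fintype ι] {W x g h : ι → K}

theorem sum_sq_div_sq_mul_sum_sq_eq_four (hS : ∑ i, x i ^ 2 / W i ^ 2 ≠ 0)
    (h1 : ∀ j, 2 * x j / W j = (∑ i, x i ^ 2 / W i ^ 2) * g j) :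
    (∑ i, x i ^ 2 / W i ^ 2) * ∑ j, g j ^ 2 = 4 := by
  set S := ∑ i, x i ^ 2 / W i ^ 2
  have hsq : ∀ j, g j ^ 2 = 4 / S ^ 2 * (x j ^ 2 / W j ^ 2) := fun j => by
    rw [eq_div_of_mul_eq hS ((mul_comm _ _).trans (h1 j).symm)]
    ring
  rw [Finset.sum_congr rfl fun j _ => hsq j, ← Finset.mul_sum]
  change S * (4 / S ^ 2 * S) = 4
  field_simp

theorem sum_sq_div_sq_mul_sum_eq_two_mul_sum_inv (hS : ∑ i, x i ^ 2 / W i ^ 2 ≠ 0)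
    (h1 : ∀ j, 2 * x j / W j = (∑ i, x i ^ 2 / W i ^ 2) * g j)
    (h2 : ∀ j, 2 / W j - 2 * x j / W j ^ 2 * g j =
      (2 * x j / W j ^ 2 - 2 * (∑ i, x i ^ 2 / W i ^ 3) * g j) * g j
        + (∑ i, x i ^ 2 / W i ^ 2) * h j) :
    (∑ i, x i ^ 2 / W i ^ 2) * ∑ j, h j = 2 * ∑ j, (W j)⁻¹ := by
  have hg := sum_sq_div_sq_mul_sum_sq_eq_four hS h1
  set S := ∑ i, x i ^ 2 / W i ^ 2
  set T := ∑ i, x i ^ 2 / W i ^ 3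
  have hxg : S * ∑ j, x j / W j ^ 2 * g j = 2 * T := by
    rw [Finset.mul_sum, Finset.mul_sum]
    refine Finset.sum_congr rfl fun j _ => ?_
    linear_combination (-(x j / W j ^ 2)) * h1 j
  have hj : ∀ j, 2 * (W j)⁻¹ - 2 * (x j / W j ^ 2 * g j) =
      2 * (x j / W j ^ 2 * g j) - 2 * T * g j ^ 2 + S * h j := fun j => by
    linear_combination h2 j
  have hsum := Finset.sum_congr rfl fun j (_ : j ∈ Finset.univ) => hj j
  simp only [Finset.sum_sub_distrib, Finset.sum_add_distrib, ← Finset.mul_sum] at hsum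
  refine mul_left_cancel₀ hS ?_
  linear_combination (-S) * hsum - 4 * hxg + 2 * T * hg

end Summation

section ImplicitFunction

variable {𝕜 ι : Type*} [NontriviallyNormedField 𝕜] [Fintype ι] {β : ι → 𝕜} {H : 𝕜 → 𝕜}
  {V : (ι → 𝕜) → 𝕜} {s : Set (ι → 𝕜)} {C : 𝕜} {x : ι → 𝕜}

theorem sum_two_mul_div_eq_of_sum_sq_div_eq (hH : Differentiable 𝕜 H) (hs : IsOpen s)
    (hV : DifferentiableOn 𝕜 V s) (hrel : ∀ x ∈ s, ∑ i, x i ^ 2 / (H (V x) - β i) = C)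
    (hden : ∀ x ∈ s, ∀ i, H (V x) - β i ≠ 0) (hx : x ∈ s) (v : ι → 𝕜) :
    ∑ i, 2 * x i * v i / (H (V x) - β i) =
      (∑ i, x i ^ 2 / (H (V x) - β i) ^ 2) * (deriv H (V x) * fderiv 𝕜 V x v) :=
  ((hH (V x)).hasDerivAt.comp_hasLineDerivAt
    ((hV.differentiableAt (hs.mem_nhds hx)).hasFDerivAt.hasLineDerivAt v)
    ).sum_two_mul_div_eq_of_eventuallyEq_const (hden x hx) (eventually_of_mem (hs.mem_nhds hx) hrel)

theorem sum_two_mul_div_sub_eq_of_sum_sq_div_eq (hH : ContDiff 𝕜 2 H) (hs : IsOpen s)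
    (hV : ContDiffOn 𝕜 2 V s) (hrel : ∀ x ∈ s, ∑ i, x i ^ 2 / (H (V x) - β i) = C)
    (hden : ∀ x ∈ s, ∀ i, H (V x) - β i ≠ 0) (hx : x ∈ s) (v : ι → 𝕜) :
    ∑ i, 2 * v i * v i / (H (V x) - β i) -
        (∑ i, 2 * x i * v i / (H (V x) - β i) ^ 2) * (deriv H (V x) * fderiv 𝕜 V x v) =
      (∑ i, 2 * x i * v i / (H (V x) - β i) ^ 2 -
          2 * (∑ i, x i ^ 2 / (H (V x) - β i) ^ 3) * (deriv H (V x) * fderiv 𝕜 V x v)) *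
          (deriv H (V x) * fderiv 𝕜 V x v)
        + (∑ i, x i ^ 2 / (H (V x) - β i) ^ 2) *
          (deriv (deriv H) (V x) * fderiv 𝕜 V x v ^ 2 +
            deriv H (V x) * fderiv 𝕜 (fun y => fderiv 𝕜 V y v) x v) := by
  have hV1 := hV.differentiableOn (by norm_num)
  have hV' : HasLineDerivAt 𝕜 V (fderiv 𝕜 V x v) x v :=
    (hV1.differentiableAt (hs.mem_nhds hx)).hasFDerivAt.hasLineDerivAt v
  have hDV : HasLineDerivAt 𝕜 (fun y => fderiv 𝕜 V y v)
      (fderiv 𝕜 (fun y => fderiv 𝕜 V y v) x v) x v := by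
    have := ((hV.fderiv_of_isOpen (m := 1) hs (by norm_num)).differentiableOn
      one_ne_zero).differentiableAt (hs.mem_nhds hx)
    exact (this.clm_apply (differentiableAt_const v)).hasFDerivAt.hasLineDerivAt v
  have hg := (hH.differentiable (by norm_num) (V x)).hasDerivAt.comp_hasLineDerivAt hV'
  have hD := ((hH.differentiable_deriv_two (V x)).hasDerivAt.comp_hasLineDerivAt hV').mul hDV
  have := hg.sum_two_mul_div_sub_eq_of_eventuallyEq hD (hden x hx)
    (eventually_of_mem (hs.mem_nhds hx) fun z hz =>
      sum_two_mul_div_eq_of_sum_sq_div_eq (hH.differentiable (by norm_num)) hs hV1 hrel hden hz v)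
  linear_combination this

end ImplicitFunction

/-- Solutions of the Laplace equation constant on a central quadric:
if `Ḣ² = ∏ᵢ (H - βᵢ)` and `V` is defined implicitly by
`∑ᵢ xᵢ²/(H(V) - βᵢ) = C`, then `V` is harmonic. -/
theorem harmonic_on_central_quadric {n : ℕ}
    (β : Fin n → ℂ) (H : ℂ → ℂ) (hH : Differentiable ℂ H)
    (hODE : ∀ v, (deriv H v)^2 = ∏ i, (H v - β i))
    (C : ℂ) (s : Set (Fin n → ℂ)) (hs : IsOpen s)
    (V : (Fin n → ℂ) → ℂ)
    (hV : ContDiffOn ℂ 2 V s)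
    (hrel : ∀ x ∈ s, ∑ i, (x i)^2 / (H (V x) - β i) = C)
    (hden : ∀ x ∈ s, ∀ i, H (V x) - β i ≠ 0)
    (hH' : ∀ x ∈ s, deriv H (V x) ≠ 0)
    (hnd : ∀ x ∈ s, ∑ i, (x i)^2 / (H (V x) - β i)^2 ≠ 0) :
    ∀ x ∈ s,
      ∑ i, fderiv ℂ (fun y => fderiv ℂ V y (Pi.single i 1)) x (Pi.single i 1) = 0 := by
  intro x hx
  have h1 := fun j => sum_two_mul_div_eq_of_sum_sq_div_eq hH hs (hV.differentiableOn (by norm_num))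
    hrel hden hx (Pi.single j 1)
  have h2 := fun j => sum_two_mul_div_sub_eq_of_sum_sq_div_eq hH.contDiff hs hV hrel hden hx
    (Pi.single j 1)
  simp only [Pi.single_apply, mul_ite, mul_one, mul_zero, ite_div, zero_div, Finset.sum_ite_eq',
    Finset.mem_univ, if_true] at h1 h2
  have hgrad := sum_sq_div_sq_mul_sum_sq_eq_four (hnd x hx) h1
  have hlap := sum_sq_div_sq_mul_sum_eq_two_mul_sum_inv (hnd x hx) h1 h2
  have hode := two_mul_deriv_deriv_eq_of_sq_deriv_eq_prod hODE (hH _) (hH.deriv _) (hH' x hx)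
    (hden x hx)
  simp only [mul_pow, ← Finset.mul_sum, Finset.sum_add_distrib] at hgrad hlap
  refine mul_left_cancel₀ (mul_ne_zero (hnd x hx) (pow_ne_zero 3 (hH' x hx))) ?_
  linear_combination deriv H (V x) ^ 2 * hlap - deriv (deriv H) (V x) * hgrad - 2 * hode
end

section
/- Suppose w₁, w₂, w₃ : ℂ → ℂ solve the Euler equations ẇ₁ = w₂w₃, ẇ₂ = w₁w₃, ẇ₃ = w₁w₂, and h₁, h₂, h₃ : Σ → ℂ satisfy {hᵢ, hⱼ} = (1/2)εᵢⱼₖ hₖ. Then xᵢ(V, p) := 2·wᵢ(V)·hᵢ(p) (no summation) solve the Nahm-type system ẋ₁ = {x₂, x₃}, ẋ₂ = {x₃, x₁}, ẋ₃ = {x₁, x₂}. -/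
/-- If `w₁, w₂, w₃` solve the Euler equations and `h₁, h₂, h₃` satisfy the
`sl(2)` Poisson relations, then `xᵢ(V,p) = 2 wᵢ(V) hᵢ(p)` solve the Nahm-type
system `ẋᵢ = ½ εᵢⱼₖ {xⱼ, xₖ}`. -/
theorem euler_solutions_give_nahm {S : Type*}
    (P : (S → ℂ) → (S → ℂ) → (S → ℂ))
    (hsmul : ∀ (a b : ℂ) (f g : S → ℂ), P (a • f) (b • g) = (a * b) • P f g)
    (w1 w2 w3 : ℂ → ℂ)
    (e1 : ∀ v, HasDerivAt w1 (w2 v * w3 v) v)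
    (e2 : ∀ v, HasDerivAt w2 (w1 v * w3 v) v)
    (e3 : ∀ v, HasDerivAt w3 (w1 v * w2 v) v)
    (h1 h2 h3 : S → ℂ)
    (r12 : P h1 h2 = (1/2 : ℂ) • h3)
    (r23 : P h2 h3 = (1/2 : ℂ) • h1)
    (r31 : P h3 h1 = (1/2 : ℂ) • h2)
    (x1 x2 x3 : ℂ → S → ℂ)
    (hx1 : ∀ v, x1 v = fun p => 2 * w1 v * h1 p)
    (hx2 : ∀ v, x2 v = fun p => 2 * w2 v * h2 p)
    (hx3 : ∀ v, x3 v = fun p => 2 * w3 v * h3 p) :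
    ∀ (v : ℂ) (p : S),
      HasDerivAt (fun u => x1 u p) (P (x2 v) (x3 v) p) v ∧
      HasDerivAt (fun u => x2 u p) (P (x3 v) (x1 v) p) v ∧
      HasDerivAt (fun u => x3 u p) (P (x1 v) (x2 v) p) v := by
  intro v p
  have s1 : x1 v = (2 * w1 v) • h1 := by
    funext q; simp [hx1 v, Pi.smul_apply, smul_eq_mul, mul_assoc]
  have s2 : x2 v = (2 * w2 v) • h2 := by
    funext q; simp [hx2 v, Pi.smul_apply, smul_eq_mul, mul_assoc]
  have s3 : x3 v = (2 * w3 v) • h3 := by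
    funext q; simp [hx3 v, Pi.smul_apply, smul_eq_mul, mul_assoc]
  have p1 : P (x2 v) (x3 v) p = 2 * (w2 v * w3 v) * h1 p := by
    rw [s2, s3, hsmul, r23]; simp [Pi.smul_apply, smul_eq_mul]; ring
  have p2 : P (x3 v) (x1 v) p = 2 * (w1 v * w3 v) * h2 p := by
    rw [s3, s1, hsmul, r31]; simp [Pi.smul_apply, smul_eq_mul]; ring
  have p3 : P (x1 v) (x2 v) p = 2 * (w1 v * w2 v) * h3 p := by
    rw [s1, s2, hsmul, r12]; simp [Pi.smul_apply, smul_eq_mul]; ring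
  refine ⟨?_, ?_, ?_⟩
  · rw [p1]
    have : HasDerivAt (fun u => 2 * w1 u * h1 p) (2 * (w2 v * w3 v) * h1 p) v :=
      ((e1 v).const_mul 2).mul_const (h1 p)
    exact this.congr_of_eventuallyEq (Filter.Eventually.of_forall fun u => by simp only [hx1])
  · rw [p2]
    have : HasDerivAt (fun u => 2 * w2 u * h2 p) (2 * (w1 v * w3 v) * h2 p) v :=
      ((e2 v).const_mul 2).mul_const (h2 p)
    exact this.congr_of_eventuallyEq (Filter.Eventually.of_forall fun u => by simp only [hx2])
  · rw [p3]
    have : HasDerivAt (fun u => 2 * w3 u * h3 p) (2 * (w1 v * w2 v) * h3 p) v :=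
      ((e3 v).const_mul 2).mul_const (h3 p)
    exact this.congr_of_eventuallyEq (Filter.Eventually.of_forall fun u => by simp only [hx3])
end

section
/- Let a > 0, r = (x, y, z) ∈ ℝ³, and a⃗ = (0, 0, a). The function V(r) = -(2/a) · arccoth((|r + a⃗| + |r - a⃗|)/(2a)) is harmonic on ℝ³ minus the segment joining (0,0,-a) and (0,0,a), and satisfies r·∇V = |r + a⃗|⁻¹ + |r - a⃗|⁻¹. -/
/-! Write `u = ‖r + a⃗‖`, `v = ‖r - a⃗‖` and `s = u + v`. Then `V = h(s)` with
`h'(s) = 4 / (s² - 4a²)`, so `∇V = h'(s) N`, where `N = ∇s` is the sum of the unit vectors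
pointing from the foci `∓a⃗` to `r`. Everything rests on the parallelogram law
`‖(r + a⃗) - (r - a⃗)‖² = 4a²`, i.e. `s² - 4a² = 2 (u v + ⟪r + a⃗, r - a⃗⟫)`. Off the segment
`s > 2a` by strict convexity of the Euclidean norm, so `V` is smooth there.

In `ℝ³` the unit radial field from a point has divergence `2 / distance`, so
`div N = 2/u + 2/v`, while `‖N‖² = (s² - 4a²) / (u v)`; hence
`ΔV = h'(s) div N + h''(s) ‖N‖²` vanishes. For the radial derivative,
`2 ⟪r ± a⃗, r⟫ = ‖r ± a⃗‖² + ⟪r + a⃗, r - a⃗⟫` turns `h'(s) ⟪N, r⟫` into `1/u + 1/v`. -/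

open scoped BigOperators

/-- `arccoth t = ½ log((t+1)/(t-1))` for `t > 1`. -/
noncomputable def arccoth (t : ℝ) : ℝ := (1/2) * Real.log ((t + 1)/(t - 1))

open RealInnerProductSpace Module Topology

theorem hasDerivAt_arccoth {t : ℝ} (h₁ : t ≠ 1) (h₂ : t ≠ -1) :
    HasDerivAt arccoth (1 / (1 - t ^ 2)) t := by
  have hp : t + 1 ≠ 0 := fun h => h₂ (by linarith)
  have hm : t - 1 ≠ 0 := sub_ne_zero.mpr h₁
  have hq : HasDerivAt (fun s => (s + 1) / (s - 1))
      ((1 * (t - 1) - (t + 1) * 1) / (t - 1) ^ 2) t :=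
    ((hasDerivAt_id t).add_const 1).div ((hasDerivAt_id t).sub_const 1) hm
  refine ((hq.log (div_ne_zero hp hm)).const_mul (1 / 2)).congr_deriv ?_
  have : 1 - t ^ 2 ≠ 0 := by
    rw [show 1 - t ^ 2 = -((t + 1) * (t - 1)) by ring]
    exact neg_ne_zero.mpr (mul_ne_zero hp hm)
  field_simp
  ring

theorem hasDerivAt_arccoth_div {b t : ℝ} (hb : b ≠ 0) (ht : t ^ 2 ≠ b ^ 2) :
    HasDerivAt (fun t => arccoth (t / b)) (-b / (t ^ 2 - b ^ 2)) t := by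
  have h₁ : t / b ≠ 1 := fun h => ht (by rw [(div_eq_one_iff_eq hb).mp h])
  have h₂ : t / b ≠ -1 := fun h => ht (by rw [div_eq_iff hb] at h; rw [h]; ring)
  have hD : t ^ 2 - b ^ 2 ≠ 0 := sub_ne_zero.mpr ht
  refine ((hasDerivAt_arccoth h₁ h₂).comp t ((hasDerivAt_id t).div_const b)).congr_deriv ?_
  rw [div_pow, one_sub_div (pow_ne_zero 2 hb), ← neg_sub (t ^ 2)]
  field_simp

section Focal

variable {E : Type*} [NormedAddCommGroup E]

noncomputable def focalSum (c y : E) : ℝ := ‖y + c‖ + ‖y - c‖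

noncomputable def focalPotential (c y : E) : ℝ :=
  -(2 / ‖c‖) * arccoth (focalSum c y / (2 * ‖c‖))

variable {c y : E}

theorem focalSum_sq_sub_pos (hy : 2 * ‖c‖ < focalSum c y) :
    0 < focalSum c y ^ 2 - 4 * ‖c‖ ^ 2 := by
  have : 0 ≤ 2 * ‖c‖ := by positivity
  nlinarith

theorem eventually_two_norm_lt_focalSum (hy : 2 * ‖c‖ < focalSum c y) :
    ∀ᶠ x in 𝓝 y, 2 * ‖c‖ < focalSum c x := by
  have : Continuous (focalSum c) := by unfold focalSum; fun_prop
  exact this.continuousAt.eventually_const_lt hy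

variable [NormedSpace ℝ E]

noncomputable def focalNormal (c y : E) : E := ‖y + c‖⁻¹ • (y + c) + ‖y - c‖⁻¹ • (y - c)

noncomputable def focalField (c y : E) : E :=
  (4 / (focalSum c y ^ 2 - 4 * ‖c‖ ^ 2)) • focalNormal c y

theorem two_norm_lt_focalSum [StrictConvexSpace ℝ E] (hy : y ∉ segment ℝ (-c) c) :
    2 * ‖c‖ < focalSum c y := by
  have hdist : dist (-c) y + dist y c = ‖y + c‖ + ‖y - c‖ := by
    rw [dist_eq_norm, dist_eq_norm, ← norm_neg, neg_sub, sub_neg_eq_add]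
  have hends : dist (-c) c = 2 * ‖c‖ := by
    rw [dist_eq_norm, ← neg_add', norm_neg, ← two_smul ℝ, norm_smul, Real.norm_two]
  refine lt_of_le_of_ne ?_ fun h => hy (mem_segment_iff_wbtw.mpr (dist_add_dist_eq_iff.mp ?_))
  · rw [focalSum, ← hdist, ← hends]
    exact dist_triangle _ _ _
  · rw [hdist, hends]
    exact h.symm

theorem add_ne_zero_of_two_norm_lt_focalSum (hy : 2 * ‖c‖ < focalSum c y) : y + c ≠ 0 := by
  intro h
  rw [focalSum, h, eq_neg_of_add_eq_zero_left h, norm_zero, zero_add, ← neg_add', norm_neg,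
    ← two_smul ℝ, norm_smul, Real.norm_two] at hy
  exact lt_irrefl _ hy

theorem sub_ne_zero_of_two_norm_lt_focalSum (hy : 2 * ‖c‖ < focalSum c y) : y - c ≠ 0 := by
  intro h
  rw [focalSum, h, sub_eq_zero.mp h, norm_zero, add_zero, ← two_smul ℝ, norm_smul,
    Real.norm_two] at hy
  exact lt_irrefl _ hy

end Focal

section Divergence

variable {E : Type*} [NormedAddCommGroup E] [NormedSpace ℝ E]

noncomputable def divergence (F : E → E) (x : E) : ℝ := LinearMap.trace ℝ E (fderiv ℝ F x)

theorem divergence_add {F G : E → E} {x : E} (hF : DifferentiableAt ℝ F x)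
    (hG : DifferentiableAt ℝ G x) :
    divergence (fun y => F y + G y) x = divergence F x + divergence G x := by
  rw [divergence, fderiv_fun_add hF hG, ContinuousLinearMap.toLinearMap_add, map_add]
  rfl

variable [FiniteDimensional ℝ E]

theorem divergence_smul {φ : E → ℝ} {F : E → E} {x : E} (hφ : DifferentiableAt ℝ φ x)
    (hF : DifferentiableAt ℝ F x) :
    divergence (fun y => φ y • F y) x = φ x * divergence F x + fderiv ℝ φ x (F x) := by
  rw [divergence, fderiv_fun_smul hφ hF, ContinuousLinearMap.toLinearMap_add, map_add,
    ContinuousLinearMap.toLinearMap_smul, map_smul]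
  congr 1
  exact LinearMap.trace_smulRight _ _

theorem divergence_sub_const (p x : E) : divergence (fun y => y - p) x = finrank ℝ E := by
  rw [divergence, fderiv_sub_const, fderiv_fun_id, ContinuousLinearMap.coe_id,
    LinearMap.trace_id]

end Divergence

section InnerProduct

variable {E : Type*} [NormedAddCommGroup E] [InnerProductSpace ℝ E]

theorem hasFDerivAt_norm_sub_const {p x : E} (hx : x ≠ p) :
    HasFDerivAt (fun y => ‖y - p‖) (‖x - p‖⁻¹ • innerSL ℝ (x - p)) x := by
  have hpos : 0 < ‖x - p‖ := norm_pos_iff.mpr (sub_ne_zero.mpr hx)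
  have h := (Real.hasDerivAt_sqrt (pow_pos hpos 2).ne').comp_hasFDerivAt x
    (hasFDerivAt_sub_const p).norm_sq
  simp only [Function.comp_def, Real.sqrt_sq (norm_nonneg _)] at h
  refine h.congr_fderiv ?_
  rw [ContinuousLinearMap.comp_id, two_nsmul, ← two_smul ℝ, smul_smul]
  congr 1
  field_simp

theorem differentiableAt_norm_sub_inv_smul {p x : E} (hx : x ≠ p) :
    DifferentiableAt ℝ (fun y => ‖y - p‖⁻¹ • (y - p)) x :=
  ((hasFDerivAt_norm_sub_const hx).differentiableAt.inv
    (norm_ne_zero_iff.mpr (sub_ne_zero.mpr hx))).smul (differentiableAt_id.sub_const p)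

theorem divergence_norm_sub_inv_smul [FiniteDimensional ℝ E] {p x : E} (hx : x ≠ p) :
    divergence (fun y => ‖y - p‖⁻¹ • (y - p)) x = (finrank ℝ E - 1) / ‖x - p‖ := by
  have hρ : ‖x - p‖ ≠ 0 := norm_ne_zero_iff.mpr (sub_ne_zero.mpr hx)
  have hinv : HasFDerivAt (fun y => ‖y - p‖⁻¹)
      (-(‖x - p‖ ^ 2)⁻¹ • ‖x - p‖⁻¹ • innerSL ℝ (x - p)) x :=
    (hasDerivAt_inv hρ).comp_hasFDerivAt x (hasFDerivAt_norm_sub_const hx)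
  rw [divergence_smul (F := fun y => y - p) hinv.differentiableAt
    (differentiableAt_id.sub_const p), divergence_sub_const, hinv.fderiv]
  simp only [smul_apply, innerSL_apply_apply, real_inner_self_eq_norm_sq, smul_eq_mul]
  field_simp
  ring

variable {c y : E}

theorem focalSum_sq_sub (c y : E) :
    focalSum c y ^ 2 - 4 * ‖c‖ ^ 2 = 2 * (‖y + c‖ * ‖y - c‖ + ⟪y + c, y - c⟫) := by
  have h : ‖(y + c) - (y - c)‖ ^ 2 = 4 * ‖c‖ ^ 2 := by
    rw [add_sub_sub_cancel, ← two_smul ℝ, norm_smul, Real.norm_two]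
    ring
  rw [norm_sub_sq_real] at h
  rw [focalSum]
  linear_combination h

theorem two_mul_inner_add_self (c y : E) :
    2 * ⟪y + c, y⟫ = ‖y + c‖ ^ 2 + ⟪y + c, y - c⟫ := by
  rw [← real_inner_smul_right, ← real_inner_self_eq_norm_sq, ← inner_add_right]
  congr 1
  module

theorem two_mul_inner_sub_self (c y : E) :
    2 * ⟪y - c, y⟫ = ‖y - c‖ ^ 2 + ⟪y + c, y - c⟫ := by
  rw [← real_inner_smul_right, ← real_inner_self_eq_norm_sq, real_inner_comm (y - c) (y + c),
    ← inner_add_right]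
  congr 1
  module

theorem hasFDerivAt_focalSum (h₁ : y + c ≠ 0) (h₂ : y - c ≠ 0) :
    HasFDerivAt (focalSum c) (innerSL ℝ (focalNormal c y)) y := by
  have hp := hasFDerivAt_norm_sub_const (p := -c) (x := y)
    (by rwa [← sub_neg_eq_add, sub_ne_zero] at h₁)
  simp only [sub_neg_eq_add] at hp
  refine (hp.add (hasFDerivAt_norm_sub_const (sub_ne_zero.mp h₂))).congr_fderiv ?_
  ext w
  simp [focalNormal]

theorem differentiableAt_focalNormal (h₁ : y + c ≠ 0) (h₂ : y - c ≠ 0) :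
    DifferentiableAt ℝ (focalNormal c) y := by
  have hp := differentiableAt_norm_sub_inv_smul (p := -c) (x := y)
    (by rwa [← sub_neg_eq_add, sub_ne_zero] at h₁)
  simp only [sub_neg_eq_add] at hp
  exact hp.add (differentiableAt_norm_sub_inv_smul (sub_ne_zero.mp h₂))

theorem norm_focalNormal_sq (h₁ : y + c ≠ 0) (h₂ : y - c ≠ 0) :
    ‖focalNormal c y‖ ^ 2 = (focalSum c y ^ 2 - 4 * ‖c‖ ^ 2) / (‖y + c‖ * ‖y - c‖) := by
  have hu : ‖y + c‖ ≠ 0 := norm_ne_zero_iff.mpr h₁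
  have hv : ‖y - c‖ ≠ 0 := norm_ne_zero_iff.mpr h₂
  rw [focalNormal, norm_add_sq_real, norm_smul, norm_smul, real_inner_smul_left,
    real_inner_smul_right, focalSum_sq_sub]
  simp only [norm_inv, norm_norm]
  field_simp
  ring

theorem divergence_focalNormal [FiniteDimensional ℝ E] (h₁ : y + c ≠ 0) (h₂ : y - c ≠ 0) :
    divergence (focalNormal c) y = (finrank ℝ E - 1) * (‖y + c‖⁻¹ + ‖y - c‖⁻¹) := by
  have hy : y ≠ -c := by rwa [← sub_neg_eq_add, sub_ne_zero] at h₁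
  have hp := differentiableAt_norm_sub_inv_smul hy
  have dp := divergence_norm_sub_inv_smul hy
  simp only [sub_neg_eq_add] at hp dp
  unfold focalNormal
  rw [divergence_add hp (differentiableAt_norm_sub_inv_smul (sub_ne_zero.mp h₂)), dp,
    divergence_norm_sub_inv_smul (sub_ne_zero.mp h₂)]
  ring

theorem hasFDerivAt_four_div_focalSum_sq_sub (hy : 2 * ‖c‖ < focalSum c y) :
    HasFDerivAt (fun x => 4 / (focalSum c x ^ 2 - 4 * ‖c‖ ^ 2))
      ((-(8 * focalSum c y) / (focalSum c y ^ 2 - 4 * ‖c‖ ^ 2) ^ 2) •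
        innerSL ℝ (focalNormal c y)) y := by
  have hφ := (hasDerivAt_const (focalSum c y) (4 : ℝ)).div
    ((hasDerivAt_pow 2 (focalSum c y)).sub_const (4 * ‖c‖ ^ 2)) (focalSum_sq_sub_pos hy).ne'
  refine (hφ.comp_hasFDerivAt y (hasFDerivAt_focalSum (add_ne_zero_of_two_norm_lt_focalSum hy)
    (sub_ne_zero_of_two_norm_lt_focalSum hy))).congr_fderiv ?_
  congr 1
  ring

theorem differentiableAt_focalField (hy : 2 * ‖c‖ < focalSum c y) :
    DifferentiableAt ℝ (focalField c) y :=
  (hasFDerivAt_four_div_focalSum_sq_sub hy).differentiableAt.smul (differentiableAt_focalNormal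
    (add_ne_zero_of_two_norm_lt_focalSum hy) (sub_ne_zero_of_two_norm_lt_focalSum hy))

theorem divergence_focalField [FiniteDimensional ℝ E] (hE : finrank ℝ E = 3)
    (hy : 2 * ‖c‖ < focalSum c y) : divergence (focalField c) y = 0 := by
  have h₁ := add_ne_zero_of_two_norm_lt_focalSum hy
  have h₂ := sub_ne_zero_of_two_norm_lt_focalSum hy
  have hu : ‖y + c‖ ≠ 0 := norm_ne_zero_iff.mpr h₁
  have hv : ‖y - c‖ ≠ 0 := norm_ne_zero_iff.mpr h₂
  have hD := (focalSum_sq_sub_pos hy).ne'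
  have hg := hasFDerivAt_four_div_focalSum_sq_sub hy
  unfold focalField
  rw [divergence_smul hg.differentiableAt (differentiableAt_focalNormal h₁ h₂),
    divergence_focalNormal h₁ h₂, hg.fderiv, hE]
  simp only [smul_apply, innerSL_apply_apply, real_inner_self_eq_norm_sq, smul_eq_mul]
  rw [norm_focalNormal_sq h₁ h₂, focalSum]
  rw [focalSum] at hD
  field_simp
  ring

theorem hasFDerivAt_focalPotential (hc : c ≠ 0) (hy : 2 * ‖c‖ < focalSum c y) :
    HasFDerivAt (focalPotential c) (innerSL ℝ (focalField c y)) y := by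
  have ha : ‖c‖ ≠ 0 := norm_ne_zero_iff.mpr hc
  have hD := (focalSum_sq_sub_pos hy).ne'
  have hs : focalSum c y ^ 2 ≠ (2 * ‖c‖) ^ 2 := by
    rw [mul_pow, show (2 : ℝ) ^ 2 = 4 by norm_num]
    exact sub_ne_zero.mp hD
  refine (((hasDerivAt_arccoth_div (mul_ne_zero two_ne_zero ha) hs).comp_hasFDerivAt y
    (hasFDerivAt_focalSum (add_ne_zero_of_two_norm_lt_focalSum hy)
      (sub_ne_zero_of_two_norm_lt_focalSum hy))).const_mul (-(2 / ‖c‖))).congr_fderiv ?_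
  rw [focalField, map_smul, smul_smul, mul_pow]
  congr 1
  field_simp
  ring

theorem inner_focalField_self (hy : 2 * ‖c‖ < focalSum c y) :
    ⟪focalField c y, y⟫ = ‖y + c‖⁻¹ + ‖y - c‖⁻¹ := by
  have hu : ‖y + c‖ ≠ 0 := norm_ne_zero_iff.mpr (add_ne_zero_of_two_norm_lt_focalSum hy)
  have hv : ‖y - c‖ ≠ 0 := norm_ne_zero_iff.mpr (sub_ne_zero_of_two_norm_lt_focalSum hy)
  have hD := focalSum_sq_sub c y
  have hK : ‖y + c‖ * ‖y - c‖ + ⟪y + c, y - c⟫ ≠ 0 := by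
    intro h
    rw [h, mul_zero] at hD
    exact (focalSum_sq_sub_pos hy).ne' hD
  rw [focalField, real_inner_smul_left, focalNormal, inner_add_left, real_inner_smul_left,
    real_inner_smul_left, hD]
  field_simp
  linear_combination (2 * ‖y - c‖) * two_mul_inner_add_self c y +
    (2 * ‖y + c‖) * two_mul_inner_sub_self c y

end InnerProduct

section Euclidean

open EuclideanSpace

variable {ι : Type*} [DecidableEq ι]

theorem sum_fderiv_fderiv_single_eq_divergence [Fintype ι] {V : EuclideanSpace ℝ ι → ℝ}
    {W : EuclideanSpace ℝ ι → EuclideanSpace ℝ ι} {x : EuclideanSpace ℝ ι}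
    (hV : ∀ᶠ y in 𝓝 x, HasFDerivAt V (innerSL ℝ (W y)) y) (hW : DifferentiableAt ℝ W x) :
    ∑ i, fderiv ℝ (fun y => fderiv ℝ V y (single i 1)) x (single i 1) = divergence W x := by
  rw [divergence, LinearMap.trace_eq_sum_inner _ (basisFun ι ℝ)]
  refine Finset.sum_congr rfl fun i _ => ?_
  have hpartial : (fun y => fderiv ℝ V y (single i 1)) =ᶠ[𝓝 x]
      fun y => innerSL ℝ (single i 1) (W y) :=
    hV.mono fun y hy => by
      change fderiv ℝ V y (single i 1) = _
      rw [hy.fderiv, innerSL_apply_apply]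
      exact real_inner_comm _ _
  have hder : HasFDerivAt (fun y => innerSL ℝ (single i 1) (W y))
      ((innerSL ℝ (single i 1)).comp (fderiv ℝ W x)) x :=
    (innerSL ℝ (single i 1)).hasFDerivAt.comp x hW.hasFDerivAt
  rw [hpartial.fderiv_eq, hder.fderiv, basisFun_apply]
  rfl

theorem sum_mul_apply_single [Fintype ι] (L : EuclideanSpace ℝ ι →L[ℝ] ℝ)
    (r : EuclideanSpace ℝ ι) :
    ∑ i, r i * L (single i 1) = L r := by
  conv_rhs => rw [← (basisFun ι ℝ).sum_repr r]
  simp only [map_sum, map_smul, basisFun_apply, basisFun_repr, smul_eq_mul]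

theorem segment_neg_single_subset (i : ι) (a : ℝ) :
    segment ℝ (-single i a) (single i a) ⊆ {r | (∀ j ≠ i, r j = 0) ∧ |r i| ≤ |a|} := by
  rintro _ ⟨s, t, hs, ht, hst, rfl⟩
  refine ⟨fun j hj => by simp [hj], ?_⟩
  have : |t - s| ≤ 1 := abs_le.mpr ⟨by linarith, by linarith⟩
  simp only [PiLp.add_apply, PiLp.smul_apply, PiLp.neg_apply, PiLp.ofLp_single,
    Pi.single_eq_same, smul_eq_mul]
  calc |s * -a + t * a| = |t - s| * |a| := by rw [← abs_mul]; ring_nf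
    _ ≤ |a| := mul_le_of_le_one_left (abs_nonneg a) this

end Euclidean

/-- The function `V(r) = -(2/a) arccoth((|r + a⃗| + |r - a⃗|)/(2a))`, with
`a⃗ = (0,0,a)`, is harmonic away from the segment joining `(0,0,-a)` and
`(0,0,a)`, and satisfies `r·∇V = |r + a⃗|⁻¹ + |r - a⃗|⁻¹`. -/
theorem eguchi_hanson_potential (a : ℝ) (ha : 0 < a)
    (av : EuclideanSpace ℝ (Fin 3)) (hav : av = EuclideanSpace.single 2 a)
    (V : EuclideanSpace ℝ (Fin 3) → ℝ)
    (hV : ∀ r, V r = -(2/a) * arccoth ((‖r + av‖ + ‖r - av‖)/(2*a)))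
    (seg : Set (EuclideanSpace ℝ (Fin 3)))
    (hseg : seg = {r | r 0 = 0 ∧ r 1 = 0 ∧ |r 2| ≤ a}) :
    ∀ r ∉ seg,
      (∑ i, fderiv ℝ (fun y => fderiv ℝ V y (EuclideanSpace.single i 1)) r
          (EuclideanSpace.single i 1) = 0) ∧
      (∑ i, r i * fderiv ℝ V r (EuclideanSpace.single i 1)
        = ‖r + av‖⁻¹ + ‖r - av‖⁻¹) := by
  intro r hr
  have hnorm : ‖av‖ = a := by rw [hav, PiLp.norm_single, Real.norm_eq_abs, abs_of_pos ha]
  have hV' : V = focalPotential av := funext fun y => by rw [hV, focalPotential, focalSum, hnorm]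
  have hout : 2 * ‖av‖ < focalSum av r := by
    refine two_norm_lt_focalSum fun hmem => hr ?_
    obtain ⟨hzero, habs⟩ := segment_neg_single_subset 2 a (hav ▸ hmem)
    rw [hseg]
    exact ⟨hzero 0 (by decide), hzero 1 (by decide), by rwa [abs_of_pos ha] at habs⟩
  have hgrad : ∀ᶠ y in 𝓝 r, HasFDerivAt V (innerSL ℝ (focalField av y)) y :=
    (eventually_two_norm_lt_focalSum hout).mono fun y hy =>
      hV' ▸ hasFDerivAt_focalPotential (norm_ne_zero_iff.mp (hnorm ▸ ha.ne')) hy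
  refine ⟨?_, ?_⟩
  · rw [sum_fderiv_fderiv_single_eq_divergence hgrad (differentiableAt_focalField hout)]
    exact divergence_focalField finrank_euclideanSpace_fin hout
  · rw [sum_mul_apply_single, hgrad.self_of_nhds.fderiv, innerSL_apply_apply]
    exact inner_focalField_self hout
end
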